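/- arXiv:2504.14182 — 2 statements merged into one kernel-verified Lean document; each statement's English description precedes it below -/
import Mathlib

section
/- If k is an even positive integer and n ≥ 2, then ∫_{-1}^{1} P_{k,n}(t)³ (1-t²)^{(n-2)/2} dt > 0. -/
/-!
Put `β = (n - 2) / 2` and `w_β(t) = (1 - t²)^β`, so that the equation reads
`((1 - t²)^(β+1) P')' = -λ w_β P` with `λ = k (k + n - 1)`, and `P'` solves the same kind of
equation for `β + 1` with degree `k - 1`. Integrating exact derivatives `((1 - t²)^(β+1) W)'`,
with `W` suitable cubic expressions in `P` and `P'`, gives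
`3 λ² ∫ P³ w_β = 4 (2β + 1) ∫ t P'³ w_{β+1}` and `Θ ∫ t P³ w_β = 12 (2β + 1) ∫ P'³ w_{β+1}`
with `Θ > 0`. By induction on the degree, `∫ P³ w_β > 0` for even degree and `∫ t P³ w_β > 0`
for odd degree; the base case is a positive constant, and `P(1) > 0` passes to the derivative
because `(2β + 2) P'(1) = λ P(1)`.
-/

open Set Polynomial

noncomputable def weightedIntegral (β : ℝ) (p : ℝ[X]) : ℝ :=
  ∫ t in (-1 : ℝ)..1, p.eval t * (1 - t ^ 2) ^ β

def SolvesGegenbauer (m lam : ℝ) (R : ℝ[X]) : Prop :=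
  (1 - X ^ 2) * derivative (derivative R) - C m * X * derivative R + C lam * R = 0

theorem one_sub_sq_nonneg_of_mem_uIcc {t : ℝ} (ht : t ∈ uIcc (-1 : ℝ) 1) : 0 ≤ 1 - t ^ 2 := by
  rw [uIcc_of_le (by norm_num)] at ht
  nlinarith [ht.1, ht.2]

theorem intervalIntegrable_eval_mul_one_sub_sq_rpow {β : ℝ} (hβ : 0 ≤ β) (p : ℝ[X]) :
    IntervalIntegrable (fun t => p.eval t * (1 - t ^ 2) ^ β) MeasureTheory.volume (-1) 1 :=
  (p.continuous.mul ((continuous_const.sub (continuous_pow 2)).rpow_const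
    fun _ => Or.inr hβ)).intervalIntegrable _ _

theorem weightedIntegral_C_mul_sub_C_mul {β : ℝ} (hβ : 0 ≤ β) (a b : ℝ) (p q : ℝ[X]) :
    weightedIntegral β (C a * p - C b * q)
      = a * weightedIntegral β p - b * weightedIntegral β q := by
  simp only [weightedIntegral, eval_sub, eval_mul, eval_C, sub_mul, mul_assoc]
  rw [intervalIntegral.integral_sub, intervalIntegral.integral_const_mul,
    intervalIntegral.integral_const_mul]
  · exact (intervalIntegrable_eval_mul_one_sub_sq_rpow hβ p).const_mul a
  · exact (intervalIntegrable_eval_mul_one_sub_sq_rpow hβ q).const_mul b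

theorem weightedIntegral_add_one {β : ℝ} (hβ : β + 1 ≠ 0) (p : ℝ[X]) :
    weightedIntegral (β + 1) p = weightedIntegral β ((1 - X ^ 2) * p) := by
  refine intervalIntegral.integral_congr fun t ht => ?_
  simp only [eval_mul, eval_sub, eval_one, eval_pow, eval_X]
  rw [Real.rpow_add_one' (one_sub_sq_nonneg_of_mem_uIcc ht) hβ]
  ring

theorem weightedIntegral_pos {β : ℝ} (hβ : 0 ≤ β) {p : ℝ[X]}
    (hp : ∀ t ∈ Ioo (-1 : ℝ) 1, 0 < p.eval t) : 0 < weightedIntegral β p :=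
  intervalIntegral.intervalIntegral_pos_of_pos_on
    (intervalIntegrable_eval_mul_one_sub_sq_rpow hβ p)
    (fun t ht => mul_pos (hp t ht) (Real.rpow_pos_of_pos (by nlinarith [ht.1, ht.2]) β))
    (by norm_num)

/-- The integrand is `((1 - t²)^(β+1) W(t))'`, and `(1 - t²)^(β+1)` vanishes at `±1`. -/
theorem weightedIntegral_eq_zero {β : ℝ} (hβ : 0 ≤ β) (W : ℝ[X]) :
    weightedIntegral β ((1 - X ^ 2) * derivative W - C (2 * β + 2) * X * W) = 0 := by
  have hderiv : ∀ t ∈ uIcc (-1 : ℝ) 1, HasDerivAt (fun s => (1 - s ^ 2) ^ (β + 1) * W.eval s)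
      (((1 - X ^ 2) * derivative W - C (2 * β + 2) * X * W).eval t * (1 - t ^ 2) ^ β) t := by
    intro t ht
    have hw := ((hasDerivAt_pow 2 t).const_sub 1).rpow_const (p := β + 1) (Or.inr (by linarith))
    refine (hw.mul (W.hasDerivAt t)).congr_deriv ?_
    rw [add_sub_cancel_right, Real.rpow_add_one' (one_sub_sq_nonneg_of_mem_uIcc ht) (by linarith)]
    simp only [eval_mul, eval_sub, eval_one, eval_pow, eval_X, eval_C]
    push_cast
    ring
  rw [weightedIntegral, intervalIntegral.integral_eq_sub_of_hasDerivAt hderiv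
    (intervalIntegrable_eval_mul_one_sub_sq_rpow hβ _)]
  norm_num [Real.zero_rpow (by linarith : β + 1 ≠ 0)]

section

variable {m β lam : ℝ} {R : ℝ[X]}

theorem solvesGegenbauer_of_eval
    (h : ∀ t : ℝ, (1 - t ^ 2) * (derivative (derivative R)).eval t - m * t * (derivative R).eval t
      + lam * R.eval t = 0) : SolvesGegenbauer m lam R :=
  Polynomial.funext fun t => by simpa using h t

theorem solvesGegenbauer_derivative (h : SolvesGegenbauer m lam R) :
    SolvesGegenbauer (m + 2) (lam - m) (derivative R) := by
  have h' := congrArg Polynomial.derivative h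
  simp only [derivative_add, derivative_sub, derivative_mul, derivative_C, derivative_one,
    derivative_X_pow, derivative_X, derivative_zero, Nat.cast_ofNat, C_ofNat] at h'
  simp only [SolvesGegenbauer, map_add, map_sub, C_ofNat]
  linear_combination h'

theorem SolvesGegenbauer.eval_derivative_one (h : SolvesGegenbauer m lam R) :
    m * (derivative R).eval 1 = lam * R.eval 1 := by
  have h1 := congrArg (eval 1) h
  simp only [eval_add, eval_sub, eval_mul, eval_pow, eval_one, eval_X, eval_C, eval_zero] at h1
  linarith

theorem SolvesGegenbauer.weightedIntegral_cube (hβ : 0 ≤ β)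
    (h : SolvesGegenbauer (2 * β + 2) lam R) :
    3 * lam ^ 2 * weightedIntegral β (R ^ 3)
      = 4 * (2 * β + 1) * weightedIntegral (β + 1) (X * derivative R ^ 3) := by
  let W := -(3 * C lam * derivative R * R ^ 2) - 2 * (1 - X ^ 2) * derivative R ^ 3
  have key : (1 - X ^ 2) * derivative W - C (2 * β + 2) * X * W
      = C (3 * lam ^ 2) * R ^ 3
        - C (4 * (2 * β + 1)) * ((1 - X ^ 2) * (X * derivative R ^ 3)) := by
    simp only [SolvesGegenbauer, map_add, map_mul, map_pow, map_one, C_ofNat] at h ⊢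
    simp only [W, derivative_sub, derivative_mul, derivative_neg, derivative_C, derivative_one,
      derivative_ofNat, derivative_X, derivative_pow, Nat.cast_ofNat, C_ofNat]
    linear_combination (-(3 * C lam) * R ^ 2 - 6 * (1 - X ^ 2) * derivative R ^ 2) * h
  have hW := weightedIntegral_eq_zero hβ W
  rw [key, weightedIntegral_C_mul_sub_C_mul hβ, ← weightedIntegral_add_one (by linarith)] at hW
  linarith

theorem SolvesGegenbauer.weightedIntegral_X_mul_cube (hβ : 0 ≤ β)
    (h : SolvesGegenbauer (2 * β + 2) lam R) :
    (9 * lam ^ 2 + 8 * lam * β ^ 2 + 28 * lam * β + 2 * lam + 16 * β ^ 3 + 20 * β ^ 2 + 4 * β)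
        * weightedIntegral β (X * R ^ 3)
      = 12 * (2 * β + 1) * weightedIntegral (β + 1) (derivative R ^ 3) := by
  let W := (C lam * (16 * C β + 1) + 8 * C β ^ 2 + 2 * C β) * R ^ 3
    + (9 * C lam - 24 * C β ^ 2 - 6 * C β) * X * derivative R * R ^ 2
    + 6 * (4 * C β + 1) * (1 - X ^ 2) * R * derivative R ^ 2
    + 6 * X * (1 - X ^ 2) * derivative R ^ 3
  have key : (1 - X ^ 2) * derivative W - C (2 * β + 2) * X * W
      = C (12 * (2 * β + 1)) * ((1 - X ^ 2) * derivative R ^ 3)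
        - C (9 * lam ^ 2 + 8 * lam * β ^ 2 + 28 * lam * β + 2 * lam + 16 * β ^ 3 + 20 * β ^ 2
          + 4 * β) * (X * R ^ 3) := by
    simp only [SolvesGegenbauer, map_add, map_mul, map_pow, map_one, C_ofNat] at h ⊢
    simp only [W, derivative_add, derivative_sub, derivative_mul, derivative_C, derivative_one,
      derivative_ofNat, derivative_X, derivative_pow, Nat.cast_ofNat, C_ofNat]
    linear_combination ((9 * C lam - 24 * C β ^ 2 - 6 * C β) * X * R ^ 2
      + 12 * (4 * C β + 1) * (1 - X ^ 2) * R * derivative R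
      + 18 * X * (1 - X ^ 2) * derivative R ^ 2) * h
  have hW := weightedIntegral_eq_zero hβ W
  rw [key, weightedIntegral_C_mul_sub_C_mul hβ, ← weightedIntegral_add_one (by linarith)] at hW
  linarith

end

theorem weightedIntegral_cube_pos (j : ℕ) :
    ∀ {β : ℝ} {R : ℝ[X]}, 0 ≤ β → R.natDegree = j →
      SolvesGegenbauer (2 * β + 2) (j * (j + 2 * β + 1)) R → 0 < R.eval 1 →
      (Even j → 0 < weightedIntegral β (R ^ 3)) ∧ (Odd j → 0 < weightedIntegral β (X * R ^ 3)) := by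
  induction j with
  | zero =>
    intro β R hβ hdeg _ hpos
    have hconst : ∀ t, R.eval t = R.eval 1 := fun t => by
      rw [eq_C_of_natDegree_eq_zero hdeg]; simp
    refine ⟨fun _ => weightedIntegral_pos hβ fun t _ => ?_, fun h => absurd h Nat.not_odd_zero⟩
    rw [eval_pow, hconst]
    positivity
  | succ i ih =>
    intro β R hβ hdeg hR hpos
    set lam : ℝ := (i + 1 : ℕ) * ((i + 1 : ℕ) + 2 * β + 1)
    have hR' : SolvesGegenbauer (2 * (β + 1) + 2) (i * (i + 2 * (β + 1) + 1)) (derivative R) := by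
      convert solvesGegenbauer_derivative hR using 1 <;> push_cast [lam] <;> ring
    have hpos' : 0 < (derivative R).eval 1 := by
      have := hR.eval_derivative_one
      nlinarith [mul_pos (by positivity : 0 < lam) hpos]
    obtain ⟨ihEven, ihOdd⟩ := ih (by linarith) (by rw [natDegree_derivative, hdeg]; rfl) hR' hpos'
    constructor
    · intro heven
      have hI := ihOdd (Nat.not_even_iff_odd.mp (Nat.even_add_one.mp heven))
      have hprod : 0 < 4 * (2 * β + 1) * weightedIntegral (β + 1) (X * derivative R ^ 3) :=
        mul_pos (by positivity) hI
      rw [← hR.weightedIntegral_cube hβ] at hprod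
      exact pos_of_mul_pos_right hprod (by positivity)
    · intro hodd
      have hI := ihEven (Nat.not_odd_iff_even.mp (Nat.odd_add_one.mp hodd))
      have hprod : 0 < 12 * (2 * β + 1) * weightedIntegral (β + 1) (derivative R ^ 3) :=
        mul_pos (by positivity) hI
      rw [← hR.weightedIntegral_X_mul_cube hβ] at hprod
      exact pos_of_mul_pos_right hprod (by positivity)

theorem cube_integral_pos_of_even_general (n k : ℕ) (hn : 2 ≤ n) (hke : Even k)
    (P : Polynomial ℝ) (hdeg : P.natDegree = k) (hnorm : P.eval 1 = 1)
    (hode : ∀ t : ℝ,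
      (1 - t ^ 2) * (P.derivative.derivative.eval t) - (n : ℝ) * t * (P.derivative.eval t)
        + (k : ℝ) * ((k : ℝ) + (n : ℝ) - 1) * P.eval t = 0) :
    0 < ∫ t in (-1 : ℝ)..1, (P.eval t) ^ 3 * (1 - t ^ 2) ^ (((n : ℝ) - 2) / 2) := by
  have hβ : 0 ≤ ((n : ℝ) - 2) / 2 := by
    have : (2 : ℝ) ≤ n := by exact_mod_cast hn
    linarith
  have hP : SolvesGegenbauer (2 * (((n : ℝ) - 2) / 2) + 2)
      (k * (k + 2 * (((n : ℝ) - 2) / 2) + 1)) P := by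
    convert solvesGegenbauer_of_eval hode using 2 <;> ring
  simpa [weightedIntegral] using
    (weightedIntegral_cube_pos k hβ hdeg hP (by rw [hnorm]; exact one_pos)).1 hke

/-- For even positive `k`, the weighted integral of the cube of the Gegenbauer-type
polynomial `P_{k,n}` (degree `k`, solving the Gegenbauer ODE, normalized by `P(1)=1`)
is strictly positive. -/
theorem cube_integral_pos_of_even (n k : ℕ) (hn : 2 ≤ n) (hk : 1 ≤ k) (hke : Even k)
    (P : Polynomial ℝ) (hdeg : P.natDegree = k) (hnorm : P.eval 1 = 1)
    (hode : ∀ t : ℝ,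
      (1 - t ^ 2) * (P.derivative.derivative.eval t) - (n : ℝ) * t * (P.derivative.eval t)
        + (k : ℝ) * ((k : ℝ) + (n : ℝ) - 1) * P.eval t = 0) :
    0 < ∫ t in (-1 : ℝ)..1, (P.eval t) ^ 3 * (1 - t ^ 2) ^ (((n : ℝ) - 2) / 2) :=
  cube_integral_pos_of_even_general n k hn hke P hdeg hnorm hode
end

section
/- On the Riemannian product (S^n × S^n, G_δ), the function f(p,q) = ⟨p,q⟩ satisfies |∇_{G_δ} f|²_{G_δ} = (1 + 1/δ)(1 - f²); in particular f is an isoparametric function whose only critical values are ±1. -/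
/-!
At a unit vector `p`, the gradient of the degree-zero extension `x ↦ ⟪x / ‖x‖, q⟫` is the
tangential part `q - ⟪p, q⟫ p` of `q`, whose squared length is `1 - ⟪p, q⟫²` when `q` is a unit
vector too. The same holds with the roles of `p` and `q` exchanged, and the product metric `G_δ`
weights the second factor by `δ⁻¹`; so `|∇f|² = (1 + 1/δ)(1 - f²)`, which vanishes only at `f = ±1`.
-/

open Real Set

/-- The squared norm (with respect to the round metric `g₀` of curvature 1) of the
spherical gradient of `u` at a point `p` of the unit sphere `S^n ⊂ ℝ^{n+1}`, computed as
the squared Euclidean norm of the gradient of the degree-zero homogeneous extension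
`x ↦ u(x/‖x‖)`. -/
noncomputable def sphereGradNormSq (n : ℕ) (u : EuclideanSpace ℝ (Fin (n + 1)) → ℝ)
    (p : EuclideanSpace ℝ (Fin (n + 1))) : ℝ :=
  ‖gradient (fun x => u (‖x‖⁻¹ • x)) p‖ ^ 2

open scoped RealInnerProductSpace

section InnerProductSpace

variable {E : Type*} [NormedAddCommGroup E] [InnerProductSpace ℝ E]

theorem hasStrictFDerivAt_norm_of_ne_zero {x : E} (hx : x ≠ 0) :
    HasStrictFDerivAt (‖·‖) (‖x‖⁻¹ • innerSL ℝ x) x := by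
  have hsqrt := (hasStrictFDerivAt_norm_sq x).sqrt (by positivity)
  simp only [sqrt_sq (norm_nonneg _)] at hsqrt
  convert hsqrt using 1
  ext v
  simp [field]

theorem norm_sub_inner_smul_sq {p : E} (hp : ‖p‖ = 1) (q : E) :
    ‖q - ⟪p, q⟫ • p‖ ^ 2 = ‖q‖ ^ 2 - ⟪p, q⟫ ^ 2 := by
  rw [norm_sub_sq_real, real_inner_smul_right, norm_smul, hp, mul_one, Real.norm_eq_abs,
    sq_abs, real_inner_comm q p]
  ring

variable [CompleteSpace E]

theorem hasGradientAt_inner_normalize {p : E} (hp : ‖p‖ = 1) (q : E) :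
    HasGradientAt (fun x => ⟪‖x‖⁻¹ • x, q⟫) (q - ⟪p, q⟫ • p) p := by
  have hp0 : p ≠ 0 := norm_ne_zero_iff.mp (by simp [hp])
  have hinv := (hasDerivAt_inv (by simp [hp])).comp_hasFDerivAt p
    (hasStrictFDerivAt_norm_of_ne_zero hp0).hasFDerivAt
  have hmul := hinv.mul ((innerSL ℝ q).hasFDerivAt (x := p))
  rw [hasGradientAt_iff_hasFDerivAt]
  refine (hmul.congr_fderiv ?_).congr_of_eventuallyEq (.of_forall fun x => ?_)
  · ext v
    simp [hp, real_inner_comm]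
    ring
  · simp [real_inner_smul_right, real_inner_comm]

end InnerProductSpace

theorem sphereGradNormSq_inner_left {n : ℕ} {p : EuclideanSpace ℝ (Fin (n + 1))}
    (hp : ‖p‖ = 1) (q : EuclideanSpace ℝ (Fin (n + 1))) :
    sphereGradNormSq n (fun x => ⟪x, q⟫) p = ‖q‖ ^ 2 - ⟪p, q⟫ ^ 2 := by
  rw [sphereGradNormSq, (hasGradientAt_inner_normalize hp q).gradient,
    norm_sub_inner_smul_sq hp]

theorem sphereGradNormSq_inner_right {n : ℕ} (p : EuclideanSpace ℝ (Fin (n + 1)))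
    {q : EuclideanSpace ℝ (Fin (n + 1))} (hq : ‖q‖ = 1) :
    sphereGradNormSq n (fun y => ⟪p, y⟫) q = ‖p‖ ^ 2 - ⟪p, q⟫ ^ 2 := by
  rw [show (fun y => ⟪p, y⟫) = (⟪·, p⟫) from funext fun y => real_inner_comm y p,
    sphereGradNormSq_inner_left hq, real_inner_comm p q]

/-- On `(S^n × S^n, G_δ)` with `G_δ = g₀ + δ g₀`, the function `f(p,q) = ⟨p,q⟩`
satisfies `|∇_{G_δ} f|²_{G_δ} = (1 + 1/δ)(1 - f²)`; in particular the only critical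
values of `f` are `±1`. -/
theorem gradient_norm_inner_product (n : ℕ) (δ : ℝ) (hδ : 0 < δ) :
    (∀ p q : EuclideanSpace ℝ (Fin (n + 1)),
      p ∈ Metric.sphere (0 : EuclideanSpace ℝ (Fin (n + 1))) 1 →
      q ∈ Metric.sphere (0 : EuclideanSpace ℝ (Fin (n + 1))) 1 →
        sphereGradNormSq n (fun x => (inner ℝ x q : ℝ)) p
          + δ⁻¹ * sphereGradNormSq n (fun y => (inner ℝ p y : ℝ)) q
          = (1 + 1 / δ) * (1 - (inner ℝ p q : ℝ) ^ 2)) ∧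
    (∀ p q : EuclideanSpace ℝ (Fin (n + 1)),
      p ∈ Metric.sphere (0 : EuclideanSpace ℝ (Fin (n + 1))) 1 →
      q ∈ Metric.sphere (0 : EuclideanSpace ℝ (Fin (n + 1))) 1 →
        sphereGradNormSq n (fun x => (inner ℝ x q : ℝ)) p
          + δ⁻¹ * sphereGradNormSq n (fun y => (inner ℝ p y : ℝ)) q = 0 →
        (inner ℝ p q : ℝ) = 1 ∨ (inner ℝ p q : ℝ) = -1) := by
  have hgradNormSq : ∀ p q : EuclideanSpace ℝ (Fin (n + 1)), ‖p‖ = 1 → ‖q‖ = 1 →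
      sphereGradNormSq n (fun x => ⟪x, q⟫) p + δ⁻¹ * sphereGradNormSq n (fun y => ⟪p, y⟫) q
        = (1 + 1 / δ) * (1 - ⟪p, q⟫ ^ 2) := by
    intro p q hp hq
    rw [sphereGradNormSq_inner_left hp, sphereGradNormSq_inner_right p hq, hp, hq]
    ring
  simp only [mem_sphere_zero_iff_norm]
  refine ⟨hgradNormSq, fun p q hp hq hcrit => ?_⟩
  rw [hgradNormSq p q hp hq] at hcrit
  have hfactor : 1 + 1 / δ ≠ 0 := by positivity
  have hsq : 1 - ⟪p, q⟫ ^ 2 = 0 := (mul_eq_zero.mp hcrit).resolve_left hfactor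
  rw [← sq_eq_one_iff]
  linarith
end
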